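/- arXiv:0810.0046 — 2 statements merged into one kernel-verified Lean document; each statement's English description precedes it below -/
import Mathlib

section
/- Fix θ₁ > 0, θ₂ ∈ ℝ, T > 0. For each integer k ≥ 1 let ℓ_k = √(θ₁k² − θ₂²/4) (assume θ₁k² > θ₂²/4 for all k ≥ 1) and b = −θ₂/2. Then lim_{k→∞} k² ∫₀ᵀ [ (1/ℓ_k²) ∫₀ᵗ e^{−2b(t−s)} sin²(ℓ_k(t−s)) ds ] dt = C(θ₂,T)/θ₁, where C(θ₂,T) = (e^{θ₂T} − θ₂T − 1)/(2θ₂²) for θ₂ ≠ 0 and T²/4 for θ₂ = 0. -/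
/-!
Substituting `τ = t - s` and `sin² x = (1 - cos 2x) / 2` splits the inner integral into
`½ ∫₀ᵗ e^{θ₂τ} dτ` and the oscillatory part `½ ∫₀ᵗ e^{θ₂τ} cos(2ℓτ) dτ`. The latter is the real part
of `∫₀ᵗ e^{(θ₂ + 2iℓ)τ} dτ`, hence `O(1/ℓ)` uniformly for `t` between `0` and `T`. Since `ℓ_k → ∞`
and `k² / ℓ_k² → 1 / θ₁`, the limit is `(1 / θ₁) · ½ ∫₀ᵀ ∫₀ᵗ e^{θ₂τ} dτ dt = C / θ₁`.
-/

open intervalIntegral Filter Topology Real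

theorem integral_exp_mul (θ t : ℝ) :
    ∫ τ in (0 : ℝ)..t, exp (θ * τ) = if θ = 0 then t else (exp (θ * t) - 1) / θ := by
  split_ifs with hθ
  · simp [hθ]
  · simp [integral_comp_mul_left (fun x => exp x) hθ, div_eq_inv_mul]

theorem integral_integral_exp_mul (θ T : ℝ) :
    ∫ t in (0 : ℝ)..T, ∫ τ in (0 : ℝ)..t, exp (θ * τ) =
      if θ = 0 then T ^ 2 / 2 else (exp (θ * T) - θ * T - 1) / θ ^ 2 := by
  simp only [integral_exp_mul]
  split_ifs with hθ
  · simp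
  · rw [integral_div, integral_sub (by apply Continuous.intervalIntegrable; fun_prop) (by simp),
      integral_exp_mul, if_neg hθ]
    simp only [integral_const, sub_zero, smul_eq_mul, mul_one]
    field_simp
    ring

theorem integral_exp_mul_cos (a ω t : ℝ) (hω : ω ≠ 0) :
    ∫ τ in (0 : ℝ)..t, exp (a * τ) * cos (ω * τ) =
      ((Complex.exp ((a + ω * Complex.I) * t) - 1) / (a + ω * Complex.I)).re := by
  set c : ℂ := a + ω * Complex.I
  have hc : c ≠ 0 := fun h => hω (by simpa [c] using congrArg Complex.im h)
  have hre : ∀ τ : ℝ, exp (a * τ) * cos (ω * τ) = Complex.reCLM (Complex.exp (c * τ)) := by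
    intro τ
    simp [c, Complex.exp_re, mul_comm]
  simp_rw [hre]
  rw [Complex.reCLM.intervalIntegral_comp_comm (Continuous.intervalIntegrable (by fun_prop) _ _),
    integral_exp_mul_complex hc]
  simp

theorem abs_integral_exp_mul_cos_le (a ω t : ℝ) (hω : ω ≠ 0) :
    |∫ τ in (0 : ℝ)..t, exp (a * τ) * cos (ω * τ)| ≤ (exp (a * t) + 1) / |ω| := by
  set c : ℂ := a + ω * Complex.I
  rw [integral_exp_mul_cos a ω t hω]
  calc |((Complex.exp (c * t) - 1) / c).re|
      ≤ ‖Complex.exp (c * t) - 1‖ / ‖c‖ := (Complex.abs_re_le_norm _).trans (norm_div _ _).le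
    _ ≤ (exp (a * t) + 1) / |ω| := by
      gcongr
      · have hnorm : ‖Complex.exp (c * t)‖ = exp (a * t) := by simp [c, Complex.norm_exp]
        simpa [hnorm] using norm_sub_le (Complex.exp (c * t)) 1
      · simpa [c] using Complex.abs_im_le_norm c

theorem tendsto_integral_integral_exp_mul_cos (a T : ℝ) :
    Tendsto (fun ω => ∫ t in (0 : ℝ)..T, ∫ τ in (0 : ℝ)..t, exp (a * τ) * cos (ω * τ))
      atTop (𝓝 0) := by
  refine squeeze_zero_norm' (a := fun ω => (exp (|a| * |T|) + 1) / ω * |T|) ?_ ?_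
  · filter_upwards [eventually_gt_atTop 0] with ω hω
    have hbound : ∀ t ∈ Set.uIoc (0 : ℝ) T,
        ‖∫ τ in (0 : ℝ)..t, exp (a * τ) * cos (ω * τ)‖ ≤ (exp (|a| * |T|) + 1) / ω := by
      intro t ht
      have htT : |t| ≤ |T| := by
        simpa using Set.abs_sub_left_of_mem_uIcc (Set.uIoc_subset_uIcc ht)
      have hat : a * t ≤ |a| * |T| :=
        calc a * t ≤ |a| * |t| := (le_abs_self _).trans (abs_mul a t).le
          _ ≤ |a| * |T| := by gcongr
      calc ‖∫ τ in (0 : ℝ)..t, exp (a * τ) * cos (ω * τ)‖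
          ≤ (exp (a * t) + 1) / |ω| := abs_integral_exp_mul_cos_le a ω t hω.ne'
        _ ≤ (exp (|a| * |T|) + 1) / ω := by rw [abs_of_pos hω]; gcongr
    simpa using norm_integral_le_of_norm_le_const hbound
  · simpa using (tendsto_const_nhds.div_atTop tendsto_id).mul_const |T|

theorem integral_exp_mul_sin_sq (θ ℓ t : ℝ) :
    ∫ s in (0 : ℝ)..t, exp (θ * (t - s)) * sin (ℓ * (t - s)) ^ 2 =
      ((∫ τ in (0 : ℝ)..t, exp (θ * τ)) -
        ∫ τ in (0 : ℝ)..t, exp (θ * τ) * cos (2 * ℓ * τ)) / 2 := by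
  have hhalf : ∀ τ, exp (θ * τ) * sin (ℓ * τ) ^ 2 =
      (exp (θ * τ) - exp (θ * τ) * cos (2 * ℓ * τ)) / 2 := by
    intro τ
    rw [sin_sq_eq_half_sub]
    ring_nf
  rw [integral_comp_sub_left (fun τ => exp (θ * τ) * sin (ℓ * τ) ^ 2) t, sub_self, sub_zero]
  simp_rw [hhalf]
  rw [integral_div, integral_sub (by apply Continuous.intervalIntegrable; fun_prop)
    (by apply Continuous.intervalIntegrable; fun_prop)]

theorem integral_integral_exp_mul_sin_sq (θ ℓ T : ℝ) :
    ∫ t in (0 : ℝ)..T, ∫ s in (0 : ℝ)..t, exp (θ * (t - s)) * sin (ℓ * (t - s)) ^ 2 =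
      ((∫ t in (0 : ℝ)..T, ∫ τ in (0 : ℝ)..t, exp (θ * τ)) -
        ∫ t in (0 : ℝ)..T, ∫ τ in (0 : ℝ)..t, exp (θ * τ) * cos (2 * ℓ * τ)) / 2 := by
  have hprim : ∀ f : ℝ → ℝ, Continuous f →
      IntervalIntegrable (fun t => ∫ τ in (0 : ℝ)..t, f τ) MeasureTheory.volume 0 T := fun f hf =>
    (continuous_primitive (fun _ _ => hf.intervalIntegrable _ _) 0).intervalIntegrable _ _
  simp_rw [integral_exp_mul_sin_sq]
  rw [integral_div, integral_sub (hprim _ (by fun_prop)) (hprim _ (by fun_prop))]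

theorem tendsto_sqrt_mul_sq_sub_atTop (a c : ℝ) (ha : 0 < a) :
    Tendsto (fun x : ℝ => √(a * x ^ 2 - c)) atTop atTop :=
  tendsto_sqrt_atTop.comp <| tendsto_atTop_add_const_right _ (-c) <|
    (tendsto_pow_atTop two_ne_zero).const_mul_atTop ha

theorem tendsto_sq_mul_one_div_sqrt_sq (a c : ℝ) (ha : 0 < a) :
    Tendsto (fun x : ℝ => x ^ 2 * (1 / √(a * x ^ 2 - c) ^ 2)) atTop (𝓝 (1 / a)) := by
  have hden : Tendsto (fun x : ℝ => a - c / x ^ 2) atTop (𝓝 a) := by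
    simpa using tendsto_const_nhds.sub
      (tendsto_const_nhds.div_atTop (tendsto_pow_atTop (α := ℝ) two_ne_zero))
  refine ((tendsto_const_nhds (x := (1 : ℝ))).div hden ha.ne').congr' ?_
  filter_upwards [eventually_gt_atTop 0,
    ((tendsto_pow_atTop two_ne_zero).const_mul_atTop ha).eventually_gt_atTop c] with x hx hxc
  rw [Pi.div_apply, sq_sqrt (by linarith)]
  field_simp

theorem statement6_general (θ₁ θ₂ T : ℝ) (hθ₁ : 0 < θ₁)
    (b : ℝ) (hbdef : b = -θ₂ / 2)
    (ℓ : ℕ → ℝ) (hℓ : ∀ k, ℓ k = Real.sqrt (θ₁ * (k : ℝ) ^ 2 - θ₂ ^ 2 / 4))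
    (C : ℝ) (hC : C = if θ₂ ≠ 0 then (Real.exp (θ₂ * T) - θ₂ * T - 1) / (2 * θ₂ ^ 2) else T ^ 2 / 4) :
    Filter.Tendsto
      (fun k : ℕ => (k : ℝ) ^ 2 *
        ∫ t in (0 : ℝ)..T, (1 / (ℓ k) ^ 2) *
          ∫ s in (0 : ℝ)..t, Real.exp (-2 * b * (t - s)) * Real.sin (ℓ k * (t - s)) ^ 2)
      Filter.atTop (nhds (C / θ₁)) := by
  have hratio : Tendsto (fun k : ℕ => (k : ℝ) ^ 2 * (1 / ℓ k ^ 2)) atTop (𝓝 (1 / θ₁)) := by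
    simpa only [hℓ, Function.comp_def] using
      (tendsto_sq_mul_one_div_sqrt_sq θ₁ (θ₂ ^ 2 / 4) hθ₁).comp tendsto_natCast_atTop_atTop
  have hfreq : Tendsto (fun k => 2 * ℓ k) atTop atTop := by
    simpa only [hℓ, Function.comp_def] using
      ((tendsto_sqrt_mul_sq_sub_atTop θ₁ (θ₂ ^ 2 / 4) hθ₁).comp
        tendsto_natCast_atTop_atTop).const_mul_atTop two_pos
  have hmean : ∫ t in (0 : ℝ)..T, ∫ τ in (0 : ℝ)..t, exp (θ₂ * τ) = 2 * C := by
    rw [integral_integral_exp_mul, hC]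
    by_cases hθ : θ₂ = 0
    · simp only [hθ, if_true, ne_eq, not_true_eq_false, if_false]
      ring
    · simp only [hθ, if_false, ne_eq, not_false_eq_true, if_true]
      field_simp
  have hlim := hratio.mul (((tendsto_const_nhds (x := 2 * C)).sub
    ((tendsto_integral_integral_exp_mul_cos θ₂ T).comp hfreq)).div_const 2)
  have hb : -2 * b = θ₂ := by rw [hbdef]; ring
  convert hlim using 2 with k
  · simp only [Function.comp_apply, integral_const_mul, hb, integral_integral_exp_mul_sin_sq,
      hmean]
    ring
  · ring

/-- Asymptotics of `k² E∫₀ᵀ u_k²(t) dt` (the inner expression is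
`E[u_k²(t)]` from the Itô isometry). -/
theorem statement6 (θ₁ θ₂ T : ℝ) (hθ₁ : 0 < θ₁) (hT : 0 < T)
    (hosc : ∀ k : ℕ, 1 ≤ k → θ₂ ^ 2 / 4 < θ₁ * (k : ℝ) ^ 2)
    (b : ℝ) (hbdef : b = -θ₂ / 2)
    (ℓ : ℕ → ℝ) (hℓ : ∀ k, ℓ k = Real.sqrt (θ₁ * (k : ℝ) ^ 2 - θ₂ ^ 2 / 4))
    (C : ℝ) (hC : C = if θ₂ ≠ 0 then (Real.exp (θ₂ * T) - θ₂ * T - 1) / (2 * θ₂ ^ 2) else T ^ 2 / 4) :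
    Filter.Tendsto
      (fun k : ℕ => (k : ℝ) ^ 2 *
        ∫ t in (0 : ℝ)..T, (1 / (ℓ k) ^ 2) *
          ∫ s in (0 : ℝ)..t, Real.exp (-2 * b * (t - s)) * Real.sin (ℓ k * (t - s)) ^ 2)
      Filter.atTop (nhds (C / θ₁)) :=
  statement6_general θ₁ θ₂ T hθ₁ b hbdef ℓ hℓ C hC
end

section
/- Let b ∈ ℝ and, for each k, let ℓ_k = √(a²k² − b²) with a ≥ 1 and |b| ≤ 1/2. Then for every T > 0, lim_{k→∞} ∫₀ᵀ (1/ℓ_k²) ∫₀ᵗ e^{−2b(t−s)} (ℓ_k cos(ℓ_k(t−s)) − b sin(ℓ_k(t−s)))² ds dt = C(−2b, T), where C(θ₂,T) = (e^{θ₂T} − θ₂T − 1)/(2θ₂²) for θ₂ ≠ 0 and T²/4 for θ₂ = 0. -/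
/-!
Substituting `u = t - s` and using the double-angle formulas, the inner integrand is
`(ℓ² + b²)/2 · e^{-2bu}` plus the derivative of
`Φ_ℓ(u) = e^{-2bu} (b cos 2ℓu + ℓ sin 2ℓu) / 4`, and `Φ_ℓ = O(ℓ)` uniformly on `[0, T]`.
After division by `ℓ²` the integrand is `½ ∫₀ᵗ e^{-2bu} du + O(1/ℓ)`, so the limit is
`½ ∫₀ᵀ ∫₀ᵗ e^{-2bu} du dt`, which evaluates to `C(-2b, T)`.
-/

open Real Filter Topology intervalIntegral Set

noncomputable def dampedOsc (b L u : ℝ) : ℝ :=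
  exp (-2 * b * u) * (b * cos (2 * L * u) + L * sin (2 * L * u)) / 4

theorem continuous_integral_exp_mul (c : ℝ) : Continuous fun t => ∫ u in 0..t, exp (c * u) :=
  continuous_primitive (fun _ _ => Continuous.intervalIntegrable (by fun_prop) _ _) 0

theorem tendsto_integral_div_sq_atTop {f : ℝ → ℝ → ℝ} {T K : ℝ}
    (hf : ∀ L, 1 ≤ L → ∀ t ∈ uIoc 0 T, ‖f L t‖ ≤ K * L) :
    Tendsto (fun L => (∫ t in 0..T, f L t) / L ^ 2) atTop (𝓝 0) := by
  refine squeeze_zero_norm' ?_ ((tendsto_const_nhds (x := K * |T|)).div_atTop tendsto_id)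
  filter_upwards [eventually_ge_atTop 1] with L hL
  calc ‖(∫ t in 0..T, f L t) / L ^ 2‖ = ‖∫ t in 0..T, f L t‖ / L ^ 2 := by
        rw [norm_div, norm_pow, norm_of_nonneg (by linarith : 0 ≤ L)]
    _ ≤ K * L * |T - 0| / L ^ 2 := by
        gcongr
        exact norm_integral_le_of_norm_le_const (hf L hL)
    _ = K * |T| / id L := by
        rw [sub_zero, id]
        field_simp

section
variable (b : ℝ)

theorem continuous_dampedOsc (L : ℝ) : Continuous (dampedOsc b L) := by
  unfold dampedOsc
  fun_prop

theorem hasDerivAt_dampedOsc (L u : ℝ) :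
    HasDerivAt (dampedOsc b L)
      (exp (-2 * b * u) * (L * cos (L * u) - b * sin (L * u)) ^ 2
        - (L ^ 2 + b ^ 2) / 2 * exp (-2 * b * u)) u := by
  have hexp : HasDerivAt (fun u => exp (-2 * b * u)) (exp (-2 * b * u) * (-2 * b)) u := by
    simpa using ((hasDerivAt_id u).const_mul (-2 * b)).exp
  have hcos : HasDerivAt (fun u => cos (2 * L * u)) (-sin (2 * L * u) * (2 * L)) u := by
    simpa using ((hasDerivAt_id u).const_mul (2 * L)).cos
  have hsin : HasDerivAt (fun u => sin (2 * L * u)) (cos (2 * L * u) * (2 * L)) u := by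
    simpa using ((hasDerivAt_id u).const_mul (2 * L)).sin
  refine ((hexp.mul ((hcos.const_mul b).add (hsin.const_mul L))).div_const 4).congr_deriv ?_
  simp only [Pi.add_apply]
  rw [show 2 * L * u = 2 * (L * u) by ring, cos_two_mul', sin_two_mul]
  linear_combination -exp (-2 * b * u) * (L ^ 2 + b ^ 2) / 2 * sin_sq_add_cos_sq (L * u)

theorem abs_dampedOsc_le (L u : ℝ) :
    |dampedOsc b L u| ≤ exp (-2 * b * u) * (|b| + |L|) / 4 := by
  have : |b * cos (2 * L * u) + L * sin (2 * L * u)| ≤ |b| + |L| := by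
    grw [abs_add_le, abs_mul, abs_mul, abs_cos_le_one, abs_sin_le_one, mul_one, mul_one]
  rw [dampedOsc, abs_div, abs_mul, abs_exp, abs_of_pos (four_pos : (0 : ℝ) < 4)]
  gcongr

theorem exists_abs_dampedOsc_le (T : ℝ) :
    ∃ M, 0 ≤ M ∧ ∀ L, ∀ u ∈ uIcc 0 T, |dampedOsc b L u| ≤ M * (|b| + |L|) := by
  obtain ⟨M, hM⟩ := (isCompact_uIcc (a := 0) (b := T)).exists_bound_of_continuousOn
    (f := fun u => exp (-2 * b * u) / 4) (by fun_prop)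
  refine ⟨M, (norm_nonneg _).trans (hM 0 left_mem_uIcc), fun L u hu => ?_⟩
  have hexp := hM u hu
  rw [norm_div, norm_of_nonneg (exp_pos _).le, RCLike.norm_ofNat] at hexp
  calc |dampedOsc b L u| ≤ exp (-2 * b * u) * (|b| + |L|) / 4 := abs_dampedOsc_le b L u
    _ ≤ M * (|b| + |L|) := by
        rw [mul_div_right_comm]
        gcongr

theorem integral_exp_mul_sq_cos_sub_sin (L t : ℝ) :
    ∫ s in 0..t, exp (-2 * b * (t - s)) * (L * cos (L * (t - s)) - b * sin (L * (t - s))) ^ 2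
      = (L ^ 2 + b ^ 2) / 2 * (∫ u in 0..t, exp (-2 * b * u))
        + (dampedOsc b L t - dampedOsc b L 0) := by
  rw [integral_comp_sub_left (fun u => exp (-2 * b * u) * (L * cos (L * u) - b * sin (L * u)) ^ 2),
    sub_self, sub_zero, ← integral_const_mul, ← integral_eq_sub_of_hasDerivAt
      (fun u _ => hasDerivAt_dampedOsc b L u) (Continuous.intervalIntegrable (by fun_prop) _ _),
    ← integral_add (Continuous.intervalIntegrable (by fun_prop) _ _)
      (Continuous.intervalIntegrable (by fun_prop) _ _)]
  simp only [add_sub_cancel]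

theorem inv_sq_mul_integral_exp_mul_sq_cos_sub_sin {L : ℝ} (hL : L ≠ 0) (t : ℝ) :
    1 / L ^ 2 * ∫ s in 0..t, exp (-2 * b * (t - s)) *
        (L * cos (L * (t - s)) - b * sin (L * (t - s))) ^ 2
      = (∫ u in 0..t, exp (-2 * b * u)) / 2 + (b ^ 2 / 2 * (∫ u in 0..t, exp (-2 * b * u))
        + (dampedOsc b L t - dampedOsc b L 0)) / L ^ 2 := by
  rw [integral_exp_mul_sq_cos_sub_sin]
  field_simp
  ring

theorem tendsto_integral_inv_sq_mul_integral_exp_mul_sq_cos_sub_sin (T : ℝ) :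
    Tendsto (fun L => ∫ t in 0..T, 1 / L ^ 2 * ∫ s in 0..t, exp (-2 * b * (t - s)) *
        (L * cos (L * (t - s)) - b * sin (L * (t - s))) ^ 2)
      atTop (𝓝 ((∫ t in 0..T, ∫ u in 0..t, exp (-2 * b * u)) / 2)) := by
  set A := fun t => ∫ u in 0..t, exp (-2 * b * u)
  set R := fun L t => b ^ 2 / 2 * A t + (dampedOsc b L t - dampedOsc b L 0)
  have hA : Continuous A := continuous_integral_exp_mul (-2 * b)
  obtain ⟨MA, hMA⟩ :=
    (isCompact_uIcc (a := 0) (b := T)).exists_bound_of_continuousOn hA.continuousOn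
  have hMA0 : 0 ≤ MA := (norm_nonneg _).trans (hMA 0 left_mem_uIcc)
  obtain ⟨M, hM0, hM⟩ := exists_abs_dampedOsc_le b T
  have hR : ∀ L, 1 ≤ L → ∀ t ∈ uIoc 0 T, ‖R L t‖ ≤ (b ^ 2 / 2 * MA + 2 * M * (|b| + 1)) * L := by
    intro L hL t ht
    have hAt := hMA t (uIoc_subset_uIcc ht)
    have hΦt := hM L t (uIoc_subset_uIcc ht)
    have hΦ0 := hM L 0 left_mem_uIcc
    rw [abs_of_pos (by linarith : 0 < L)] at hΦt hΦ0
    calc ‖R L t‖ ≤ b ^ 2 / 2 * ‖A t‖ + (|dampedOsc b L t| + |dampedOsc b L 0|) := by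
          grw [norm_add_le, norm_mul, norm_sub_le]
          simp
      _ ≤ b ^ 2 / 2 * MA + (M * (|b| + L) + M * (|b| + L)) := by gcongr
      _ ≤ _ := by
          nlinarith [mul_nonneg (mul_nonneg (sq_nonneg b) hMA0) (sub_nonneg.2 hL),
            mul_nonneg (mul_nonneg hM0 (abs_nonneg b)) (sub_nonneg.2 hL)]
  have hF : ∀ᶠ L in atTop, (∫ t in 0..T, 1 / L ^ 2 * ∫ s in 0..t, exp (-2 * b * (t - s)) *
        (L * cos (L * (t - s)) - b * sin (L * (t - s))) ^ 2)
      = (∫ t in 0..T, A t) / 2 + (∫ t in 0..T, R L t) / L ^ 2 := by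
    filter_upwards [eventually_ne_atTop 0] with L hL
    simp_rw [inv_sq_mul_integral_exp_mul_sq_cos_sub_sin b hL]
    rw [integral_add, integral_div, integral_div]
    exacts [(hA.div_const 2).intervalIntegrable _ _,
      ((continuous_const.mul hA).add ((continuous_dampedOsc b L).sub continuous_const)
        |>.div_const _).intervalIntegrable _ _]
  simpa using (tendsto_const_nhds.add (tendsto_integral_div_sq_atTop hR)).congr'
    (hF.mono fun _ h => h.symm)

end

theorem integral_integral_exp_mul_div_two (c T : ℝ) :
    (∫ t in 0..T, ∫ u in 0..t, exp (c * u)) / 2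
      = if c ≠ 0 then (exp (c * T) - c * T - 1) / (2 * c ^ 2) else T ^ 2 / 4 := by
  split_ifs with hc
  · have hinner : ∀ t, ∫ u in 0..t, exp (c * u) = (exp (c * t) - 1) / c := by
      intro t
      rw [integral_comp_mul_left (fun u => exp u) hc, integral_exp, mul_zero, exp_zero,
        smul_eq_mul]
      field_simp
    simp_rw [hinner]
    rw [integral_div, integral_sub, integral_comp_mul_left (fun u => exp u) hc, integral_exp,
      integral_const]
    · simp only [mul_zero, exp_zero, smul_eq_mul, sub_zero, mul_one]
      field_simp
      ring
    all_goals exact Continuous.intervalIntegrable (by fun_prop) _ _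
  · obtain rfl : c = 0 := not_not.mp hc
    simp only [zero_mul, exp_zero, integral_one, sub_zero, integral_id]
    ring

theorem tendsto_sqrt_mul_natCast_sq_sub_atTop {a : ℝ} (ha : a ≠ 0) (b : ℝ) :
    Tendsto (fun k : ℕ => √(a ^ 2 * (k : ℝ) ^ 2 - b ^ 2)) atTop atTop :=
  tendsto_sqrt_atTop.comp <| tendsto_atTop_add_const_right _ _ <|
    ((tendsto_pow_atTop two_ne_zero).comp tendsto_natCast_atTop_atTop).const_mul_atTop
      (by positivity)

theorem statement8_general (a b T : ℝ) (ha : 1 ≤ a)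
    (ℓ : ℕ → ℝ) (hℓ : ∀ k, ℓ k = Real.sqrt (a ^ 2 * (k : ℝ) ^ 2 - b ^ 2))
    (C : ℝ) (hC : C = if (-2 * b) ≠ 0 then
        (Real.exp (-2 * b * T) - (-2 * b) * T - 1) / (2 * (-2 * b) ^ 2) else T ^ 2 / 4) :
    Filter.Tendsto
      (fun k : ℕ =>
        ∫ t in (0 : ℝ)..T, (1 / (ℓ k) ^ 2) *
          ∫ s in (0 : ℝ)..t, Real.exp (-2 * b * (t - s)) *
            (ℓ k * Real.cos (ℓ k * (t - s)) - b * Real.sin (ℓ k * (t - s))) ^ 2)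
      Filter.atTop (nhds C) := by
  have hℓ_atTop : Tendsto ℓ atTop atTop := by
    rw [funext hℓ]
    exact tendsto_sqrt_mul_natCast_sq_sub_atTop (by positivity) b
  rw [hC, ← integral_integral_exp_mul_div_two]
  exact (tendsto_integral_inv_sq_mul_integral_exp_mul_sq_cos_sub_sin b T).comp hℓ_atTop

/-- Asymptotics of `E∫₀ᵀ v_k²(t) dt` (written via the Itô isometry). -/
theorem statement8 (a b T : ℝ) (ha : 1 ≤ a) (hb : |b| ≤ 1/2) (hT : 0 < T)
    (ℓ : ℕ → ℝ) (hℓ : ∀ k, ℓ k = Real.sqrt (a ^ 2 * (k : ℝ) ^ 2 - b ^ 2))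
    (C : ℝ) (hC : C = if (-2 * b) ≠ 0 then
        (Real.exp (-2 * b * T) - (-2 * b) * T - 1) / (2 * (-2 * b) ^ 2) else T ^ 2 / 4) :
    Filter.Tendsto
      (fun k : ℕ =>
        ∫ t in (0 : ℝ)..T, (1 / (ℓ k) ^ 2) *
          ∫ s in (0 : ℝ)..t, Real.exp (-2 * b * (t - s)) *
            (ℓ k * Real.cos (ℓ k * (t - s)) - b * Real.sin (ℓ k * (t - s))) ^ 2)
      Filter.atTop (nhds C) :=
  statement8_general a b T ha ℓ hℓ C hC
end
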